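/- For every nonnegative integer n and real u, u^n = \sum_{i=0}^{n} \delta_i^{(n)} q_i(u), where \delta_i^{(n)} = ((n+1)!/2^n) * (-1)^{n-i} (2i)! / ((n-i)! i! (2i+1-n)!) when (n-1)/2 \leq i \leq n, and \delta_i^{(n)} = 0 when 0 \leq i < (n-1)/2. -/

import Mathlib

open Finset

/-- The Bessel polynomial `q_n(u)`. -/
noncomputable def qBessel (n : ℕ) (u : ℝ) : ℝ :=
  ∑ k ∈ Finset.range (n + 1),
    ((n.factorial * (2 * n - k).factorial * 2 ^ k : ℝ) /
      ((2 * n).factorial * (n - k).factorial * k.factorial)) * u ^ k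

/-- Carlitz's coefficients. -/
noncomputable def carlitzDelta (n i : ℕ) : ℝ :=
  if n ≤ 2 * i + 1 then
    ((n + 1).factorial / 2 ^ n : ℝ) * ((-1) ^ (n - i) * (2 * i).factorial /
      ((n - i).factorial * i.factorial * (2 * i + 1 - n).factorial))
  else 0


/-!
Multiplying the expansion of `u ^ n` by `u ^ 2` and using the three-term relation
`u ^ 2 * q_i = (2i+1)(2i+3) (q_{i+2} - q_{i+1})`, summation by parts shows that the expansion of
`u ^ (n + 2)` has coefficients `(2i+1)(2i+3) δ_i - (2i+3)(2i+5) δ_{i+1}` in front of `q_{i+2}`,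
and Carlitz's coefficients satisfy exactly this recurrence. Both the three-term relation and the
recurrence are identities between closed forms; writing the factorial that must vanish outside the
support as `1 / m!`, extended by zero to negative `m`, makes each of them a single computation.
-/

open Nat

noncomputable def invFactorial (m : ℤ) : ℝ :=
  if 0 ≤ m then ((m.toNat)! : ℝ)⁻¹ else 0

lemma invFactorial_natCast (k : ℕ) : invFactorial k = ((k ! : ℕ) : ℝ)⁻¹ := by
  simp [invFactorial]

lemma invFactorial_of_neg {m : ℤ} (hm : m < 0) : invFactorial m = 0 :=
  if_neg hm.not_ge

lemma invFactorial_eq_mul_succ (m : ℤ) : invFactorial m = (m + 1) * invFactorial (m + 1) := by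
  rcases lt_trichotomy m (-1) with hm | rfl | hm
  · rw [invFactorial_of_neg (by omega), invFactorial_of_neg (by omega), mul_zero]
  · simp [invFactorial_of_neg]
  · lift m to ℕ using (by omega)
    rw [← Nat.cast_succ, invFactorial_natCast, invFactorial_natCast, Nat.factorial_succ]
    push_cast
    field_simp

lemma carlitzDelta_of_add_eq {n i j : ℕ} (h : i + j = n) :
    carlitzDelta n i = ((i + j + 1)! / 2 ^ (i + j) * (-1) ^ j * (2 * i)! / (i ! * j !) : ℝ) *
      invFactorial (i + 1 - j) := by
  subst h
  rw [carlitzDelta, Nat.add_sub_cancel_left]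
  split_ifs with hsupp
  · rw [show (i : ℤ) + 1 - j = (2 * i + 1 - (i + j) : ℕ) by omega, invFactorial_natCast]
    field_simp
  · rw [invFactorial_of_neg (by omega), mul_zero]

lemma carlitzDelta_self (n : ℕ) : carlitzDelta n n = (2 * n)! / (2 ^ n * n !) := by
  rw [carlitzDelta, if_pos (by omega), Nat.sub_self, show 2 * n + 1 - n = n + 1 by omega]
  simp only [Nat.factorial_succ, Nat.factorial_zero]
  push_cast
  field_simp

lemma carlitzDelta_add_two_zero (n : ℕ) : carlitzDelta (n + 2) 0 = 0 :=
  if_neg (by omega)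

lemma carlitzDelta_add_two_one (n : ℕ) : carlitzDelta (n + 2) 1 = -3 * carlitzDelta n 0 := by
  match n with
  | 0 | 1 => norm_num [carlitzDelta]
  | n + 2 => simp [carlitzDelta]

lemma carlitzDelta_add_two_self (n : ℕ) :
    carlitzDelta (n + 2) (n + 2) = (2 * n + 1) * (2 * n + 3) * carlitzDelta n n := by
  rw [carlitzDelta_self, carlitzDelta_self]
  simp only [Nat.factorial_succ, Nat.mul_add]
  push_cast
  field_simp
  ring

lemma carlitzDelta_add_two_add_two {n i : ℕ} (h : i < n) :
    carlitzDelta (n + 2) (i + 2) =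
      (2 * i + 1) * (2 * i + 3) * carlitzDelta n i
        - (2 * i + 3) * (2 * i + 5) * carlitzDelta n (i + 1) := by
  obtain ⟨j, rfl⟩ : ∃ j, n = i + 1 + j := ⟨n - (i + 1), by omega⟩
  rw [carlitzDelta_of_add_eq (i := i + 2) (j := j + 1) (by ring),
    carlitzDelta_of_add_eq (j := j + 1) (by ring), carlitzDelta_of_add_eq (j := j) (by ring)]
  have hinv : invFactorial (i + 1 - (j + 1 : ℕ)) =
      ((i - j + 1) * (i - j + 2) : ℝ) * invFactorial (i + 2 - j) := by
    rw [invFactorial_eq_mul_succ, invFactorial_eq_mul_succ (_ + 1)]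
    push_cast
    ring_nf
  rw [hinv, show ((i + 2 : ℕ) : ℤ) + 1 - (j + 1 : ℕ) = i + 2 - j by push_cast; ring,
    show ((i + 1 : ℕ) : ℤ) + 1 - j = i + 2 - j by push_cast; ring,
    show i + 2 + (j + 1) + 1 = i + j + 1 + 3 by ring, show i + (j + 1) + 1 = i + j + 1 + 1 by ring,
    show i + 1 + j + 1 = i + j + 1 + 1 by ring]
  simp only [Nat.factorial_succ, Nat.mul_add, pow_succ]
  push_cast
  field_simp
  ring

/-- The coefficient `α_k^{(n)}` of `q_n`, made to vanish for `k > n` by the factor `1 / (n - k)!`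
(which also kills the junk value of `(2 * n - k)!` for `k > 2 * n`). -/
noncomputable def besselCoeff (n k : ℕ) : ℝ :=
  n ! * (2 * n - k)! * 2 ^ k / ((2 * n)! * k !) * invFactorial (n - k)

lemma qBessel_eq_sum_besselCoeff {n N : ℕ} (hN : n < N) (u : ℝ) :
    qBessel n u = ∑ k ∈ range N, besselCoeff n k * u ^ k := by
  rw [qBessel]
  refine sum_subset_zero_on_sdiff (range_subset_range.2 hN) (fun k hk => ?_) (fun k hk => ?_)
  · rw [besselCoeff, invFactorial_of_neg (by simp at hk; omega), mul_zero, zero_mul]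
  · rw [besselCoeff, ← Nat.cast_sub (by simp at hk; omega), invFactorial_natCast]
    field_simp

lemma besselCoeff_zero_right (n : ℕ) : besselCoeff n 0 = 1 := by
  simp only [besselCoeff, Nat.cast_zero, sub_zero, Nat.sub_zero, invFactorial_natCast,
    Nat.factorial_zero, Nat.cast_one]
  field_simp

lemma besselCoeff_succ_one (n : ℕ) : besselCoeff (n + 1) 1 = 1 := by
  rw [besselCoeff, show ((n + 1 : ℕ) : ℤ) - (1 : ℕ) = n by push_cast; ring, invFactorial_natCast,
    show 2 * (n + 1) - 1 = 2 * n + 1 by omega, show 2 * (n + 1) = 2 * n + 1 + 1 by ring]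
  simp only [Nat.factorial_succ]
  push_cast
  field_simp
  ring

lemma besselCoeff_eq_mul_sub (i k : ℕ) :
    besselCoeff i k =
      (2 * i + 1) * (2 * i + 3) * (besselCoeff (i + 2) (k + 2) - besselCoeff (i + 1) (k + 2)) := by
  rcases lt_or_ge i k with h | h
  · simp only [besselCoeff, invFactorial_of_neg (show (i : ℤ) - k < 0 by omega),
      invFactorial_of_neg (show ((i + 2 : ℕ) : ℤ) - (k + 2 : ℕ) < 0 by omega),
      invFactorial_of_neg (show ((i + 1 : ℕ) : ℤ) - (k + 2 : ℕ) < 0 by omega)]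
    ring
  obtain ⟨m, rfl⟩ := Nat.exists_eq_add_of_le h
  have e₁ : ((k + m : ℕ) : ℤ) - k = m := by push_cast; ring
  have e₂ : ((k + m + 2 : ℕ) : ℤ) - (k + 2 : ℕ) = m := by push_cast; ring
  have e₃ : ((k + m + 1 : ℕ) : ℤ) - (k + 2 : ℕ) = m - 1 := by push_cast; ring
  rw [besselCoeff, besselCoeff, besselCoeff, e₁, e₂, e₃, invFactorial_eq_mul_succ (m - 1),
    sub_add_cancel, invFactorial_natCast, show 2 * (k + m) - k = k + 2 * m by omega,
    show 2 * (k + m + 2) - (k + 2) = k + 2 * m + 2 by omega,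
    show 2 * (k + m + 1) - (k + 2) = k + 2 * m by omega]
  simp only [Nat.factorial_succ, Nat.mul_add, pow_succ, show k + m + 2 = k + m + 1 + 1 by ring]
  push_cast
  field_simp
  ring

lemma qBessel_add_two_sub_qBessel_add_one (i : ℕ) (u : ℝ) :
    qBessel (i + 2) u - qBessel (i + 1) u =
      ∑ k ∈ range (i + 1),
        (besselCoeff (i + 2) (k + 2) - besselCoeff (i + 1) (k + 2)) * u ^ (k + 2) := by
  rw [qBessel_eq_sum_besselCoeff (show i + 2 < i + 3 by omega),
    qBessel_eq_sum_besselCoeff (show i + 1 < i + 3 by omega), ← sum_sub_distrib, sum_range_succ',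
    sum_range_succ']
  simp only [zero_add, besselCoeff_zero_right, besselCoeff_succ_one, sub_self, add_zero, sub_mul]

lemma sq_mul_qBessel (i : ℕ) (u : ℝ) :
    u ^ 2 * qBessel i u = (2 * i + 1) * (2 * i + 3) * (qBessel (i + 2) u - qBessel (i + 1) u) := by
  rw [qBessel_add_two_sub_qBessel_add_one, qBessel_eq_sum_besselCoeff (lt_add_one i), mul_sum,
    mul_sum]
  refine sum_congr rfl fun k _ => ?_
  rw [besselCoeff_eq_mul_sub]
  ring

lemma sum_range_succ_mul_sub_by_parts {R : Type*} [CommRing R] (f g : ℕ → R) (n : ℕ) :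
    ∑ i ∈ range (n + 1), f i * (g (i + 2) - g (i + 1)) =
      ∑ i ∈ range n, (f i - f (i + 1)) * g (i + 2) + f n * g (n + 2) - f 0 * g 1 := by
  induction n with
  | zero => simp only [zero_add, range_one, sum_singleton, range_zero, sum_empty]; ring
  | succ n ih => rw [sum_range_succ, ih, sum_range_succ]; ring

theorem pow_eq_sum_carlitz (n : ℕ) (u : ℝ) :
    u ^ n = ∑ i ∈ Finset.range (n + 1), carlitzDelta n i * qBessel i u := by
  induction n using Nat.twoStepInduction with
  | zero => simp [carlitzDelta, qBessel]
  | one => norm_num [sum_range_succ, carlitzDelta, qBessel]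
  | more n ih _ =>
    set f : ℕ → ℝ := fun i => (2 * i + 1) * (2 * i + 3) * carlitzDelta n i
    have hcoeff : ∀ k ∈ range n, carlitzDelta (n + 2) (k + 1 + 1) * qBessel (k + 1 + 1) u =
        (f k - f (k + 1)) * qBessel (k + 2) u := fun k hk => by
      rw [carlitzDelta_add_two_add_two (mem_range.1 hk)]
      simp only [f]
      push_cast
      ring
    calc u ^ (n + 2) = u ^ 2 * u ^ n := by ring
      _ = ∑ i ∈ range (n + 1), f i * (qBessel (i + 2) u - qBessel (i + 1) u) := by
        rw [ih, mul_sum]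
        refine sum_congr rfl fun i _ => ?_
        rw [mul_left_comm, sq_mul_qBessel]
        ring
      _ = ∑ i ∈ range n, (f i - f (i + 1)) * qBessel (i + 2) u + f n * qBessel (n + 2) u
            - f 0 * qBessel 1 u := sum_range_succ_mul_sub_by_parts f (qBessel · u) n
      _ = _ := by
        rw [sum_range_succ, sum_range_succ', sum_range_succ', sum_congr rfl hcoeff,
          carlitzDelta_add_two_zero, carlitzDelta_add_two_one, carlitzDelta_add_two_self]
        simp only [f]
        push_cast
        ring
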